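/- The cuboctahedron graph is not 5-gonal: there exist five vertices a, b, c, x, y such that d(x,y) + d(a,b) + d(a,c) + d(b,c) > d(x,a) + d(x,b) + d(x,c) + d(y,a) + d(y,b) + d(y,c), where d is the graph distance. Consequently, the cuboctahedron graph admits no embedding with any scale λ ≥ 1 into any ℤ^n. -/

import Mathlib

/-- The vertices of the cuboctahedron: the 12 points of `ℤ^3` that are coordinate
permutations of `(±1, ±1, 0)`. -/
def CuboctaVertex (v : Fin 3 → ℤ) : Prop :=
  ∃ σ : Equiv.Perm (Fin 3), |v (σ 0)| = 1 ∧ |v (σ 1)| = 1 ∧ v (σ 2) = 0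

/-- The cuboctahedron graph: vertices as above, adjacent iff the squared Euclidean
distance equals 2. -/
def cuboctahedronGraph : SimpleGraph {v : Fin 3 → ℤ // CuboctaVertex v} :=
  SimpleGraph.fromRel (fun v w => ∑ i, (v.val i - w.val i) ^ 2 = 2)

/-!
Take `a = (-1,-1,0)`, `b = (-1,1,0)`, `c = (1,-1,0)`, `x = (-1,0,-1)`, `y = (-1,0,1)`. Two vertices
are adjacent iff their dot product is `1`, so `x` and `y` are adjacent to `a` and `b` and at distance
two from `c`, making the left side `8`; the pairs `xy`, `ab`, `ac` are non-adjacent and `b = -c`, so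
`b` and `c` have no common neighbour, making the right side at least `9`. The 5-gonal inequality holds on
`ℤ`, hence, summed over coordinates, for the `ℓ¹` distance on `ℤⁿ`, hence for every graph with a
scaled embedding into `ℤⁿ`.
-/

open Matrix

namespace SimpleGraph

variable {V : Type*} {G : SimpleGraph V} {u v : V}

theorem Reachable.two_lt_dist_of_commonNeighbors_eq_empty (hr : G.Reachable u v) (hne : u ≠ v)
    (hnadj : ¬G.Adj u v) (hcommon : G.commonNeighbors u v = ∅) : 2 < G.dist u v := by
  have h := two_lt_edist_iff.2 ⟨hne, hnadj, hcommon⟩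
  rw [← hr.coe_dist_eq_edist] at h
  exact_mod_cast h

end SimpleGraph

theorem abs_sub_five_gonal (x y a b c : ℤ) :
    |x - y| + |a - b| + |a - c| + |b - c| ≤
      |x - a| + |x - b| + |x - c| + |y - a| + |y - b| + |y - c| := by
  simp only [Int.abs_eq_natAbs]
  omega

theorem five_gonal_of_scaled_l1_embedding {V ι : Type*} [Fintype ι] {d : V → V → ℕ} {lam : ℕ}
    (hlam : 0 < lam) {f : V → ι → ℤ} (hf : ∀ u v, (lam : ℤ) * d u v = ∑ i, |f u i - f v i|)
    (a b c x y : V) :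
    d x y + d a b + d a c + d b c ≤ d x a + d x b + d x c + d y a + d y b + d y c := by
  have h : (lam : ℤ) * ↑(d x y + d a b + d a c + d b c) ≤
      (lam : ℤ) * ↑(d x a + d x b + d x c + d y a + d y b + d y c) := by
    push_cast
    simp only [mul_add, hf, ← Finset.sum_add_distrib]
    exact Finset.sum_le_sum fun i _ => abs_sub_five_gonal _ _ _ _ _
  exact_mod_cast le_of_mul_le_mul_left h (by exact_mod_cast hlam)

theorem CuboctaVertex.dotProduct_self {v : Fin 3 → ℤ} (hv : CuboctaVertex v) : v ⬝ᵥ v = 2 := by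
  obtain ⟨σ, h0, h1, h2⟩ := hv
  rw [dotProduct, ← Equiv.sum_comp σ, Fin.sum_univ_three, ← abs_mul_abs_self (v (σ 0)),
    ← abs_mul_abs_self (v (σ 1)), h0, h1, h2]
  norm_num

namespace Cuboctahedron

abbrev Vertex := {v : Fin 3 → ℤ // CuboctaVertex v}

theorem adj_iff {u w : Vertex} : cuboctahedronGraph.Adj u w ↔ u.1 ⬝ᵥ w.1 = 1 := by
  have hu := u.2.dotProduct_self
  have hw := w.2.dotProduct_self
  simp only [dotProduct, Fin.sum_univ_three] at hu hw ⊢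
  refine ⟨?_, fun h => ⟨fun huw => ?_, Or.inl ?_⟩⟩
  · rintro ⟨-, h | h⟩ <;> simp only [Fin.sum_univ_three] at h <;> nlinarith
  · rw [huw] at h
    omega
  · simp only [Fin.sum_univ_three]
    nlinarith

theorem commonNeighbors_eq_empty_of_neg {u w : Vertex} (h : w.1 = -u.1) :
    cuboctahedronGraph.commonNeighbors u w = ∅ := by
  refine Set.eq_empty_of_forall_notMem fun z hz => ?_
  rw [SimpleGraph.mem_commonNeighbors, adj_iff, adj_iff, h, neg_dotProduct] at hz
  omega

def a : Vertex := ⟨![-1, -1, 0], Equiv.refl _, by decide⟩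
def b : Vertex := ⟨![-1, 1, 0], Equiv.refl _, by decide⟩
def c : Vertex := ⟨![1, -1, 0], Equiv.refl _, by decide⟩
def x : Vertex := ⟨![-1, 0, -1], Equiv.swap 1 2, by decide⟩
def y : Vertex := ⟨![-1, 0, 1], Equiv.swap 1 2, by decide⟩
def xc : Vertex := ⟨![0, -1, -1], Equiv.swap 0 2, by decide⟩
def yc : Vertex := ⟨![0, -1, 1], Equiv.swap 0 2, by decide⟩

theorem five_gonal_inequality_violated :
    cuboctahedronGraph.dist x a + cuboctahedronGraph.dist x b + cuboctahedronGraph.dist x c +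
        cuboctahedronGraph.dist y a + cuboctahedronGraph.dist y b + cuboctahedronGraph.dist y c <
      cuboctahedronGraph.dist x y + cuboctahedronGraph.dist a b + cuboctahedronGraph.dist a c +
        cuboctahedronGraph.dist b c := by
  have hxa : cuboctahedronGraph.Adj x a := adj_iff.2 (by decide)
  have hxb : cuboctahedronGraph.Adj x b := adj_iff.2 (by decide)
  have hya : cuboctahedronGraph.Adj y a := adj_iff.2 (by decide)
  have hyb : cuboctahedronGraph.Adj y b := adj_iff.2 (by decide)
  have hxxc : cuboctahedronGraph.Adj x xc := adj_iff.2 (by decide)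
  have hyyc : cuboctahedronGraph.Adj y yc := adj_iff.2 (by decide)
  have hxcc : cuboctahedronGraph.Adj xc c := adj_iff.2 (by decide)
  have hycc : cuboctahedronGraph.Adj yc c := adj_iff.2 (by decide)
  have hxc := SimpleGraph.dist_le (.cons hxxc (.cons hxcc .nil))
  have hyc := SimpleGraph.dist_le (.cons hyyc (.cons hycc .nil))
  have hxy := (hxa.reachable.trans hya.reachable.symm).one_lt_dist_of_ne_of_not_adj
    (by decide) (by rw [adj_iff]; decide)
  have hab := (hxa.reachable.symm.trans hxb.reachable).one_lt_dist_of_ne_of_not_adj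
    (by decide) (by rw [adj_iff]; decide)
  have hac := (hxa.reachable.symm.trans (hxxc.reachable.trans hxcc.reachable))
    |>.one_lt_dist_of_ne_of_not_adj (by decide) (by rw [adj_iff]; decide)
  have hbc := (hxb.reachable.symm.trans (hxxc.reachable.trans hxcc.reachable))
    |>.two_lt_dist_of_commonNeighbors_eq_empty (by decide) (by rw [adj_iff]; decide)
      (commonNeighbors_eq_empty_of_neg (by decide))
  simp only [SimpleGraph.Walk.length_cons, SimpleGraph.Walk.length_nil] at hxc hyc
  simp only [SimpleGraph.dist_eq_one_iff_adj.2, hxa, hxb, hya, hyb]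
  omega

end Cuboctahedron

/-- The cuboctahedron graph is not 5-gonal, and consequently admits no
embedding with any scale `λ ≥ 1` into any `ℤ^n`. -/
theorem cuboctahedron_not_five_gonal_not_embeddable :
    (∃ a b c x y : {v : Fin 3 → ℤ // CuboctaVertex v},
      cuboctahedronGraph.dist x a + cuboctahedronGraph.dist x b +
          cuboctahedronGraph.dist x c + cuboctahedronGraph.dist y a +
          cuboctahedronGraph.dist y b + cuboctahedronGraph.dist y c <
        cuboctahedronGraph.dist x y + cuboctahedronGraph.dist a b +
          cuboctahedronGraph.dist a c + cuboctahedronGraph.dist b c) ∧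
    ∀ (n lam : ℕ), 1 ≤ lam →
      ¬ ∃ f : {v : Fin 3 → ℤ // CuboctaVertex v} → Fin n → ℤ,
          ∀ u v, (lam : ℤ) * (cuboctahedronGraph.dist u v : ℤ) =
            ∑ i, |f u i - f v i| := by
  refine ⟨⟨_, _, _, _, _, Cuboctahedron.five_gonal_inequality_violated⟩, ?_⟩
  rintro n lam hlam ⟨f, hf⟩
  exact (five_gonal_of_scaled_l1_embedding hlam hf _ _ _ _ _).not_gt
    Cuboctahedron.five_gonal_inequality_violated
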